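/- Let n ≥ 3, let c₁,…,c_s ∈ ℝⁿ be distinct points, let λ₁,…,λ_s, k, k₁ be real constants, and define u(x) = Σ_{l=1}^{s} k·λ_l·|x−c_l|^{2−n} − k₁ for x ∈ ℝⁿ ∖ {c₁,…,c_s}, where |x−c_l| denotes the Euclidean distance. Let Ω ⊆ ℝⁿ ∖ {c₁,…,c_s} be an open set on which u > 0, and set N = 1/u, φ = N^{1/(n−2)}, ψ = √((n−1)/(2(n−2)))·(1 − N). Then the triple (φ, N, ψ) satisfies the electrostatic PDE system with cosmological constant Λ = 0 on Ω. -/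

import Mathlib

/-- The partial derivative of `f : ℝⁿ → ℝ` in the `i`-th coordinate direction. -/
noncomputable def pd {n : ℕ} (i : Fin n) (f : (Fin n → ℝ) → ℝ) : (Fin n → ℝ) → ℝ :=
  fun x => fderiv ℝ f x (Pi.single i 1)

/-- The electrostatic PDE system with cosmological constant `Λ` on `Ω ⊆ ℝⁿ`
(equations (2.2)-(2.5) of the paper). -/
def ElectrostaticSystem {n : ℕ} (Ω : Set (Fin n → ℝ)) (φ N ψ : (Fin n → ℝ) → ℝ)
    (Λ : ℝ) : Prop :=
  ∀ x ∈ Ω,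
    (∀ i j : Fin n, i ≠ j →
      ((n : ℝ) - 2) * N x * pd i (pd j φ) x - φ x * pd i (pd j N) x
        - pd i φ x * pd j N x - pd j φ x * pd i N x
        + (2 * φ x / N x) * (pd i ψ x * pd j ψ x) = 0) ∧
    (∀ i : Fin n,
      φ x * (((n : ℝ) - 2) * N x * pd i (pd i φ) x - φ x * pd i (pd i N) x
          - 2 * pd i φ x * pd i N x + (2 * φ x / N x) * (pd i ψ x) ^ 2)
        + ∑ k : Fin n, (φ x * N x * pd k (pd k φ) x + φ x * pd k φ x * pd k N x
          - ((n : ℝ) - 1) * N x * (pd k φ x) ^ 2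
          - (2 / (((n : ℝ) - 1) * N x)) * (φ x) ^ 2 * (pd k ψ x) ^ 2)
        = (2 * Λ / ((n : ℝ) - 1)) * N x) ∧
    (∑ k : Fin n, (N x * φ x * pd k (pd k ψ) x
        - ((n : ℝ) - 2) * N x * pd k φ x * pd k ψ x
        - φ x * pd k ψ x * pd k N x) = 0) ∧
    (∑ k : Fin n, ((φ x) ^ 2 * N x * pd k (pd k N) x
        - ((n : ℝ) - 2) * φ x * pd k φ x * N x * pd k N x
        - (2 * ((n : ℝ) - 2) / ((n : ℝ) - 1)) * (φ x) ^ 2 * (pd k ψ x) ^ 2)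
      = -(2 * Λ / ((n : ℝ) - 1)) * (N x) ^ 2)


/-!
Put `N = 1/u`, `φ = N^(1/(n-2))`, `ψ = a (1 - N)` with `a² = (n-1)/(2(n-2))`. By the chain
rule every second derivative of `φ`, `N`, `ψ` is a combination of `∂ᵢu ∂ⱼu` and `∂ᵢ∂ⱼu`. The
exponent `1/(n-2)` and the constant `a` are exactly what make the off-diagonal equations hold
identically, while each traced equation collapses to a multiple of `Δu`. So every positive
harmonic `u` gives a solution, and the multi-centred potential is harmonic away from the centres
since `|x - c|^(2-n)` is the fundamental solution of the Laplacian in dimension `n`.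
-/

open Filter Topology

variable {n : ℕ} {f g : (Fin n → ℝ) → ℝ} {x : Fin n → ℝ}

theorem Filter.EventuallyEq.pd (h : f =ᶠ[𝓝 x] g) (i : Fin n) : pd i f =ᶠ[𝓝 x] pd i g :=
  (h.fderiv (𝕜 := ℝ)).mono fun y hy => by simp only [_root_.pd, hy]

theorem pd_fun_sub_const (c : ℝ) (i : Fin n) : pd i (fun y => f y - c) = pd i f := by
  ext y
  simp only [pd, fderiv_sub_const]

theorem pd_fun_mul (hf : DifferentiableAt ℝ f x) (hg : DifferentiableAt ℝ g x) (i : Fin n) :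
    pd i (fun y => f y * g y) x = pd i f x * g x + f x * pd i g x := by
  simp only [pd, fderiv_fun_mul hf hg, add_apply, smul_apply, smul_eq_mul]
  ring

theorem pd_fun_sum {ι : Type*} (s : Finset ι) {F : ι → (Fin n → ℝ) → ℝ}
    (hF : ∀ l ∈ s, DifferentiableAt ℝ (F l) x) (i : Fin n) :
    pd i (fun y => ∑ l ∈ s, F l y) x = ∑ l ∈ s, pd i (F l) x := by
  simp only [pd, fderiv_fun_sum hF, sum_apply]

theorem pd_comp {φ : ℝ → ℝ} {φ' : ℝ} (hφ : HasDerivAt φ φ' (f x)) (hf : DifferentiableAt ℝ f x)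
    (i : Fin n) : pd i (fun y => φ (f y)) x = φ' * pd i f x := by
  have h : HasFDerivAt (fun y => φ (f y)) (φ' • fderiv ℝ f x) x :=
    hφ.comp_hasFDerivAt x hf.hasFDerivAt
  simp only [pd, h.fderiv, smul_apply, smul_eq_mul]

theorem ContDiffAt.eventually_differentiableAt (hf : ContDiffAt ℝ 2 f x) :
    ∀ᶠ y in 𝓝 x, DifferentiableAt ℝ f y :=
  (hf.eventually (by simp)).mono fun _ hy => hy.differentiableAt (by simp)

theorem ContDiffAt.differentiableAt_pd (hf : ContDiffAt ℝ 2 f x) (i : Fin n) :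
    DifferentiableAt ℝ (pd i f) x :=
  ((hf.fderiv_right (m := 1) (by norm_num)).differentiableAt (by simp)).clm_apply
    (differentiableAt_const _)

theorem pd_pd_comp {φ φ' : ℝ → ℝ} {φ'' : ℝ} (hf : ContDiffAt ℝ 2 f x)
    (hφ : ∀ᶠ t in 𝓝 (f x), HasDerivAt φ (φ' t) t) (hφ' : HasDerivAt φ' φ'' (f x))
    (i j : Fin n) :
    pd i (pd j (fun y => φ (f y))) x
      = φ'' * pd i f x * pd j f x + φ' (f x) * pd i (pd j f) x := by
  have hfirst : pd j (fun y => φ (f y)) =ᶠ[𝓝 x] fun y => φ' (f y) * pd j f y := by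
    filter_upwards [hf.eventually_differentiableAt, hf.continuousAt.eventually hφ]
      with y hfy hφy
    exact pd_comp hφy hfy j
  have hdiff := hf.differentiableAt (by simp)
  have hdiff' : DifferentiableAt ℝ (fun y => φ' (f y)) x := hφ'.differentiableAt.comp x hdiff
  rw [(hfirst.pd i).eq_of_nhds, pd_fun_mul hdiff' (hf.differentiableAt_pd j), pd_comp hφ' hdiff]

-- `Fin n → ℝ` carries the sup norm, so Mathlib's `InnerProductSpace.laplacian` and `dist` do not
-- apply; the Laplacian and the squared Euclidean distance are written in coordinates.
noncomputable def laplacian (f : (Fin n → ℝ) → ℝ) (x : Fin n → ℝ) : ℝ := ∑ k, pd k (pd k f) x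

theorem Filter.EventuallyEq.laplacian_eq (h : f =ᶠ[𝓝 x] g) : laplacian f x = laplacian g x :=
  Finset.sum_congr rfl fun k _ => ((h.pd k).pd k).eq_of_nhds

theorem laplacian_fun_sub_const (c : ℝ) : laplacian (fun y => f y - c) x = laplacian f x := by
  simp only [laplacian, pd_fun_sub_const]

theorem laplacian_fun_sum {ι : Type*} (s : Finset ι) {F : ι → (Fin n → ℝ) → ℝ}
    (hF : ∀ l ∈ s, ContDiffAt ℝ 2 (F l) x) :
    laplacian (fun y => ∑ l ∈ s, F l y) x = ∑ l ∈ s, laplacian (F l) x := by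
  have hfirst (k : Fin n) :
      pd k (fun y => ∑ l ∈ s, F l y) =ᶠ[𝓝 x] fun y => ∑ l ∈ s, pd k (F l) y := by
    filter_upwards [(eventually_all_finset s).2 fun l hl =>
      (hF l hl).eventually_differentiableAt] with y hy
    exact pd_fun_sum s hy k
  simp only [laplacian, ((hfirst _).pd _).eq_of_nhds,
    pd_fun_sum s fun l hl => (hF l hl).differentiableAt_pd _]
  exact Finset.sum_comm

theorem laplacian_comp {φ φ' : ℝ → ℝ} {φ'' : ℝ} (hf : ContDiffAt ℝ 2 f x)
    (hφ : ∀ᶠ t in 𝓝 (f x), HasDerivAt φ (φ' t) t) (hφ' : HasDerivAt φ' φ'' (f x)) :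
    laplacian (fun y => φ (f y)) x = φ'' * ∑ k, pd k f x ^ 2 + φ' (f x) * laplacian f x := by
  simp only [laplacian, pd_pd_comp hf hφ hφ', Finset.sum_add_distrib, Finset.mul_sum]
  congr 1; exact Finset.sum_congr rfl fun k _ => by ring

def sqDist (c x : Fin n → ℝ) : ℝ := ∑ i, (x i - c i) ^ 2

theorem contDiff_sqDist (c : Fin n → ℝ) : ContDiff ℝ ⊤ (sqDist c) := by
  unfold sqDist; fun_prop

theorem sqDist_pos {c : Fin n → ℝ} (h : x ≠ c) : 0 < sqDist c x := by
  obtain ⟨i, hi⟩ := Function.ne_iff.1 h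
  exact lt_of_lt_of_le (pow_pos (abs_pos.2 (sub_ne_zero.2 hi)) 2 |>.trans_eq (sq_abs _))
    (Finset.single_le_sum (fun j _ => sq_nonneg (x j - c j)) (Finset.mem_univ i))

theorem pd_coord (i j : Fin n) : pd j (fun y => y i) x = (Pi.single j 1 : Fin n → ℝ) i := by
  have h : HasFDerivAt (fun y : Fin n → ℝ => y i) (ContinuousLinearMap.proj i) x :=
    (ContinuousLinearMap.proj (R := ℝ) (φ := fun _ : Fin n => ℝ) i).hasFDerivAt
  simp [pd, h.fderiv]

theorem pd_sqDist (c : Fin n → ℝ) (j : Fin n) : pd j (sqDist c) x = 2 * (x j - c j) := by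
  have hsq (i : Fin n) : HasDerivAt (fun t => (t - c i) ^ 2) (2 * (x i - c i)) (x i) := by
    simpa using ((hasDerivAt_id (x i)).sub_const (c i)).fun_pow 2
  unfold sqDist
  rw [pd_fun_sum _ fun i _ => by fun_prop]
  simp only [fun i => pd_comp (f := fun y => y i) (hsq i) (by fun_prop), pd_coord,
    Pi.single_apply, mul_ite, mul_one, mul_zero, Finset.sum_ite_eq', Finset.mem_univ, if_true]

theorem sum_sq_pd_sqDist (c x : Fin n → ℝ) : ∑ k, pd k (sqDist c) x ^ 2 = 4 * sqDist c x := by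
  simp only [pd_sqDist, sqDist, Finset.mul_sum]
  exact Finset.sum_congr rfl fun k _ => by ring

theorem laplacian_sqDist (c x : Fin n → ℝ) : laplacian (sqDist c) x = 2 * n := by
  have hlin (k : Fin n) : HasDerivAt (fun t => 2 * (t - c k)) 2 (x k) := by
    simpa using ((hasDerivAt_id (x k)).sub_const (c k)).const_mul 2
  have hpd (k : Fin n) : pd k (sqDist c) = fun y => 2 * (y k - c k) := funext fun y => pd_sqDist c k
  have hpd2 (k : Fin n) : pd k (fun y => 2 * (y k - c k)) x = 2 := by
    rw [pd_comp (f := fun y => y k) (hlin k) (by fun_prop), pd_coord]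
    simp
  simp only [laplacian, hpd, hpd2, Finset.sum_const, Finset.card_univ, Fintype.card_fin,
    nsmul_eq_mul]
  ring

theorem laplacian_const_mul_sqDist_rpow (C : ℝ) {c : Fin n → ℝ} (hx : x ≠ c) :
    laplacian (fun y => C * sqDist c y ^ ((2 - n : ℝ) / 2)) x = 0 := by
  set α : ℝ := (2 - n) / 2
  have hq := sqDist_pos hx
  have hφ : ∀ᶠ t in 𝓝 (sqDist c x),
      HasDerivAt (fun t => C * t ^ α) (C * (α * t ^ (α - 1))) t :=
    (eventually_ne_nhds hq.ne').mono fun t ht =>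
      (Real.hasDerivAt_rpow_const (Or.inl ht)).const_mul C
  have hφ' : HasDerivAt (fun t => C * (α * t ^ (α - 1)))
      (C * (α * ((α - 1) * sqDist c x ^ (α - 1 - 1)))) (sqDist c x) :=
    ((Real.hasDerivAt_rpow_const (Or.inl hq.ne')).const_mul α).const_mul C
  rw [laplacian_comp ((contDiff_sqDist c).contDiffAt.of_le le_top) hφ hφ', sum_sq_pd_sqDist,
    laplacian_sqDist, Real.rpow_sub_one hq.ne' (α - 1)]
  field_simp
  ring

theorem contDiffAt_const_mul_sqDist_rpow (C : ℝ) {c : Fin n → ℝ} (hx : x ≠ c) :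
    ContDiffAt ℝ 2 (fun y => C * sqDist c y ^ ((2 - n : ℝ) / 2)) x :=
  contDiffAt_const.mul (((contDiff_sqDist c).contDiffAt.of_le le_top).rpow_const_of_ne
    (sqDist_pos hx).ne')

noncomputable def newtonPotential {ι : Type*} [Fintype ι] (c : ι → Fin n → ℝ) (w : ι → ℝ)
    (x : Fin n → ℝ) : ℝ :=
  ∑ l, w l * sqDist (c l) x ^ ((2 - n : ℝ) / 2)

section newtonPotential

variable {ι : Type*} [Fintype ι] {c : ι → Fin n → ℝ}

theorem contDiffAt_newtonPotential (w : ι → ℝ) (hx : x ∉ Set.range c) :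
    ContDiffAt ℝ 2 (newtonPotential c w) x := by
  unfold newtonPotential
  exact ContDiffAt.sum fun l _ => contDiffAt_const_mul_sqDist_rpow _ fun h => hx ⟨l, h.symm⟩

theorem laplacian_newtonPotential (w : ι → ℝ) (hx : x ∉ Set.range c) :
    laplacian (newtonPotential c w) x = 0 := by
  unfold newtonPotential
  rw [laplacian_fun_sum _ fun l _ =>
    contDiffAt_const_mul_sqDist_rpow _ fun h => hx ⟨l, h.symm⟩]
  exact Finset.sum_eq_zero fun l _ =>
    laplacian_const_mul_sqDist_rpow _ fun h => hx ⟨l, h.symm⟩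

end newtonPotential

theorem pd_rpow (hf : DifferentiableAt ℝ f x) (h : f x ≠ 0) (m : ℝ) (i : Fin n) :
    pd i (fun y => f y ^ m) x = m * f x ^ (m - 1) * pd i f x :=
  pd_comp (Real.hasDerivAt_rpow_const (Or.inl h)) hf i

theorem pd_pd_rpow (hf : ContDiffAt ℝ 2 f x) (h : f x ≠ 0) (m : ℝ) (i j : Fin n) :
    pd i (pd j (fun y => f y ^ m)) x
      = m * (m - 1) * f x ^ (m - 2) * pd i f x * pd j f x
        + m * f x ^ (m - 1) * pd i (pd j f) x := by
  have hφ : ∀ᶠ t in 𝓝 (f x), HasDerivAt (fun t => t ^ m) (m * t ^ (m - 1)) t :=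
    (eventually_ne_nhds h).mono fun t ht => Real.hasDerivAt_rpow_const (Or.inl ht)
  rw [pd_pd_comp hf hφ ((Real.hasDerivAt_rpow_const (Or.inl h)).const_mul m), sub_sub,
    one_add_one_eq_two]
  ring

theorem hasDerivAt_one_div {t : ℝ} (ht : t ≠ 0) : HasDerivAt (fun t => 1 / t) (-(t ^ 2)⁻¹) t := by
  simpa only [one_div] using hasDerivAt_inv ht

theorem pd_one_div (hf : DifferentiableAt ℝ f x) (h : f x ≠ 0) (i : Fin n) :
    pd i (fun y => 1 / f y) x = -(pd i f x / f x ^ 2) := by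
  rw [pd_comp (hasDerivAt_one_div h) hf]
  ring

theorem pd_pd_one_div (hf : ContDiffAt ℝ 2 f x) (h : f x ≠ 0) (i j : Fin n) :
    pd i (pd j (fun y => 1 / f y)) x
      = 2 * pd i f x * pd j f x / f x ^ 3 - pd i (pd j f) x / f x ^ 2 := by
  have hφ' : HasDerivAt (fun t => -(t ^ 2)⁻¹) (2 / f x ^ 3) (f x) := by
    refine ((hasDerivAt_pow 2 (f x)).inv (pow_ne_zero 2 h)).fun_neg.congr_deriv ?_
    field_simp
    ring
  rw [pd_pd_comp hf ((eventually_ne_nhds h).mono fun t ht => hasDerivAt_one_div ht) hφ']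
  ring

theorem electrostaticSystem_singleton_of_derivatives (hn : 3 ≤ n) {p a : ℝ}
    (hp : p = 1 / ((n : ℝ) - 2)) (ha : a ^ 2 = ((n : ℝ) - 1) / (2 * ((n : ℝ) - 2)))
    {u N φ ψ : (Fin n → ℝ) → ℝ} (hux : u x ≠ 0) (hNx : N x = 1 / u x)
    (hN1 : ∀ i, pd i N x = -(pd i u x / u x ^ 2))
    (hN2 : ∀ i j, pd i (pd j N) x
      = 2 * pd i u x * pd j u x / u x ^ 3 - pd i (pd j u) x / u x ^ 2)
    (hφ1 : ∀ i, pd i φ x = p * φ x / N x * pd i N x)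
    (hφ2 : ∀ i j, pd i (pd j φ) x
      = p * (p - 1) * φ x / N x ^ 2 * pd i N x * pd j N x + p * φ x / N x * pd i (pd j N) x)
    (hψ1 : ∀ i, pd i ψ x = -a * pd i N x) (hψ2 : ∀ i j, pd i (pd j ψ) x = -a * pd i (pd j N) x)
    (hharm : laplacian u x = 0) :
    ElectrostaticSystem {x} φ N ψ 0 := by
  intro y (hy : y = x)
  subst y
  have hn' : (3 : ℝ) ≤ n := by exact_mod_cast hn
  have hn2 : (n : ℝ) - 2 ≠ 0 := by linarith
  have hn1 : (n : ℝ) - 1 ≠ 0 := by linarith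
  have hN : N x ≠ 0 := by
    rw [hNx]
    exact one_div_ne_zero hux
  have hψψ (i j : Fin n) : pd i ψ x * pd j ψ x = a ^ 2 * (pd i N x * pd j N x) := by
    rw [hψ1, hψ1]
    ring
  have hoff (i j : Fin n) : ((n : ℝ) - 2) * N x * pd i (pd j φ) x - φ x * pd i (pd j N) x
      - pd i φ x * pd j N x - pd j φ x * pd i N x
      + (2 * φ x / N x) * (pd i ψ x * pd j ψ x) = 0 := by
    rw [hφ2, hφ1, hφ1, hψψ, ha, hp]
    field_simp
    ring
  -- each traced equation is, term by term, a multiple of `∂ₖ∂ₖu`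
  have hΔ (C : ℝ) (F : Fin n → ℝ) (hF : ∀ k, F k = C * pd k (pd k u) x) : ∑ k, F k = 0 := by
    rw [Finset.sum_congr rfl fun k _ => hF k, ← Finset.mul_sum]
    exact mul_eq_zero_of_right C hharm
  refine ⟨fun i j _ => hoff i j, fun i => ?_, ?_, ?_⟩
  · rw [hΔ (-(p * φ x ^ 2 / u x ^ 2)) _ fun k => ?_]
    · linear_combination φ x * hoff i i
    · rw [hφ2, hφ1, sq (pd k ψ x), hψψ, ha, hN2, hN1, hNx, hp]
      field_simp
      ring
  · refine hΔ (a * φ x / u x ^ 3) _ fun k => ?_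
    rw [hψ2, hφ1, hψ1, hN2, hN1, hNx, hp]
    field_simp
    ring
  · rw [hΔ (-(φ x ^ 2 / u x ^ 3)) _ fun k => ?_]
    · ring
    · rw [hφ1, sq (pd k ψ x), hψψ, ha, hN2, hN1, hNx, hp]
      field_simp
      ring

theorem electrostaticSystem_of_harmonic (hn : 3 ≤ n) {u : (Fin n → ℝ) → ℝ}
    {Ω : Set (Fin n → ℝ)} (hu : ∀ x ∈ Ω, ContDiffAt ℝ 2 u x) (hpos : ∀ x ∈ Ω, 0 < u x)
    (hharm : ∀ x ∈ Ω, laplacian u x = 0) :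
    ElectrostaticSystem Ω (fun x => (1 / u x) ^ ((1 : ℝ) / ((n : ℝ) - 2))) (fun x => 1 / u x)
      (fun x => √(((n : ℝ) - 1) / (2 * ((n : ℝ) - 2))) * (1 - 1 / u x)) 0 := by
  intro x hx
  set a : ℝ := √(((n : ℝ) - 1) / (2 * ((n : ℝ) - 2)))
  set N : (Fin n → ℝ) → ℝ := fun y => 1 / u y
  have hn' : (3 : ℝ) ≤ n := by exact_mod_cast hn
  have ha : a ^ 2 = ((n : ℝ) - 1) / (2 * ((n : ℝ) - 2)) :=
    Real.sq_sqrt (div_nonneg (by linarith) (by linarith))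
  have hux := (hpos x hx).ne'
  have hNpos : 0 < N x := one_div_pos.2 (hpos x hx)
  have hNc : ContDiffAt ℝ 2 N x := contDiffAt_const.div (hu x hx) hux
  have hNd : DifferentiableAt ℝ N x := hNc.differentiableAt (by simp)
  have hψ : ∀ᶠ t in 𝓝 (N x), HasDerivAt (fun t => a * (1 - t)) (-a) t :=
    Eventually.of_forall fun t => by simpa using ((hasDerivAt_id t).const_sub 1).const_mul a
  refine electrostaticSystem_singleton_of_derivatives hn rfl ha hux rfl
    (pd_one_div ((hu x hx).differentiableAt (by simp)) hux) (pd_pd_one_div (hu x hx) hux)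
    (fun i => ?_) (fun i j => ?_) (fun i => pd_comp hψ.self_of_nhds hNd i)
    (fun i j => ?_) (hharm x hx) x rfl
  · rw [pd_rpow hNd hNpos.ne', Real.rpow_sub_one hNpos.ne']
    ring
  · rw [pd_pd_rpow hNc hNpos.ne', Real.rpow_sub hNpos, Real.rpow_sub_one hNpos.ne', Real.rpow_two]
    ring
  · rw [pd_pd_comp hNc hψ (hasDerivAt_const _ _)]
    ring

theorem multi_centered_MP_solution_general
    (n : ℕ) (hn : 3 ≤ n) (s : ℕ) (c : Fin s → (Fin n → ℝ))
    (lam : Fin s → ℝ) (k k₁ : ℝ)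
    (u : (Fin n → ℝ) → ℝ)
    (hu : ∀ x : Fin n → ℝ, x ∉ Set.range c →
      u x = (∑ l : Fin s,
        k * lam l * Real.sqrt (∑ i : Fin n, (x i - c l i) ^ 2) ^ ((2 : ℝ) - (n : ℝ))) - k₁)
    (Ω : Set (Fin n → ℝ)) (hΩc : Ω ⊆ (Set.range c)ᶜ)
    (hupos : ∀ x ∈ Ω, 0 < u x)
    (N φ ψ : (Fin n → ℝ) → ℝ)
    (hN : N = fun x => 1 / u x)
    (hφ : φ = fun x => N x ^ ((1 : ℝ) / ((n : ℝ) - 2)))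
    (hψ : ψ = fun x => Real.sqrt (((n : ℝ) - 1) / (2 * ((n : ℝ) - 2))) * (1 - N x)) :
    ElectrostaticSystem Ω φ N ψ 0 := by
  have hloc (x : Fin n → ℝ) (hx : x ∈ Ω) :
      u =ᶠ[𝓝 x] fun y => newtonPotential c (fun l => k * lam l) y - k₁ := by
    filter_upwards [(Set.finite_range c).isClosed.isOpen_compl.mem_nhds (hΩc hx)] with y hy
    rw [hu y hy, newtonPotential]
    congr 1
    refine Finset.sum_congr rfl fun l _ => ?_
    rw [Real.sqrt_eq_rpow, ← Real.rpow_mul (Finset.sum_nonneg fun i _ => sq_nonneg _),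
      one_div_mul_eq_div]
    rfl
  subst hN hφ hψ
  refine electrostaticSystem_of_harmonic hn (fun x hx => ?_) hupos fun x hx => ?_
  · exact ((contDiffAt_newtonPotential _ (hΩc hx)).sub contDiffAt_const).congr_of_eventuallyEq
      (hloc x hx)
  · rw [(hloc x hx).laplacian_eq, laplacian_fun_sub_const, laplacian_newtonPotential _ (hΩc hx)]

/-- Corollary 3.2 of the paper: the classical multi-centered
Majumdar–Papapetrou solution of the electrovacuum system. -/
theorem multi_centered_MP_solution
    (n : ℕ) (hn : 3 ≤ n) (s : ℕ) (c : Fin s → (Fin n → ℝ))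
    (hc : Function.Injective c)
    (lam : Fin s → ℝ) (k k₁ : ℝ)
    (u : (Fin n → ℝ) → ℝ)
    (hu : ∀ x : Fin n → ℝ, x ∉ Set.range c →
      u x = (∑ l : Fin s,
        k * lam l * Real.sqrt (∑ i : Fin n, (x i - c l i) ^ 2) ^ ((2 : ℝ) - (n : ℝ))) - k₁)
    (Ω : Set (Fin n → ℝ)) (hΩ : IsOpen Ω) (hΩc : Ω ⊆ (Set.range c)ᶜ)
    (hupos : ∀ x ∈ Ω, 0 < u x)
    (N φ ψ : (Fin n → ℝ) → ℝ)
    (hN : N = fun x => 1 / u x)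
    (hφ : φ = fun x => N x ^ ((1 : ℝ) / ((n : ℝ) - 2)))
    (hψ : ψ = fun x => Real.sqrt (((n : ℝ) - 1) / (2 * ((n : ℝ) - 2))) * (1 - N x)) :
    ElectrostaticSystem Ω φ N ψ 0 :=
  multi_centered_MP_solution_general n hn s c lam k k₁ u hu Ω hΩc hupos N φ ψ hN hφ hψ
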